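/- arXiv:2206.05752 — 3 statements merged into one kernel-verified Lean document; each statement's English description precedes it below -/
import Mathlib

section
/- Let g, h, g', h' ∈ ℚ with h ≠ 0, h' ≠ 0, g ≠ 0, g' ≠ 0, and suppose there exists λ ∈ ℚ, λ ≠ 0, such that 24g'+6 = λ(24g+6), 9g'² = λ²·9g², 81g'³+18g'²+36h' = λ³(81g³+18g²+36h), and 4h'² = λ⁵·4h². If (g',h') ≠ (g,h), then g' = -g/(8g+1), λ = 1/(8g+1), and 32h² - 4g²h - g⁵ = 0. -/
/-!
Comparing degree-2 invariants gives `g' = ± λ g`. With the plus sign the degree-1 invariant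
forces `λ = 1`, and then the degree-3 invariant forces `h' = h`. With the minus sign the
degree-1 invariant gives `λ (8g + 1) = 1`, the degree-3 invariant expresses `h'` through
`g, h, λ`, and substituting into the degree-5 invariant leaves `g (32h² - 4g²h - g⁵) = 0`,
where `g ≠ 0` because `g = 0` would again mean `λ = 1`.
-/

section IgusaClebsch

variable {K : Type*} [Field K] [CharZero K] {g h g' h' lam : K}

theorem eq_of_igusaClebsch_eq_of_scale_eq_one
    (h1 : 24 * g' + 6 = 1 * (24 * g + 6))
    (h3 : 81 * g' ^ 3 + 18 * g' ^ 2 + 36 * h' = 1 ^ 3 * (81 * g ^ 3 + 18 * g ^ 2 + 36 * h)) :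
    (g', h') = (g, h) := by
  have hg : g' = g := by linear_combination h1 / 24
  subst hg
  have hh : h' = h := by linear_combination h3 / 36
  rw [hh]

theorem neg_scale_of_igusaClebsch_eq (hlam : lam ≠ 1)
    (h1 : 24 * g' + 6 = lam * (24 * g + 6))
    (h2 : 9 * g' ^ 2 = lam ^ 2 * (9 * g ^ 2)) :
    g' = -(lam * g) ∧ lam * (8 * g + 1) = 1 := by
  have hsq : g' ^ 2 = (lam * g) ^ 2 := by linear_combination h2 / 9
  rcases sq_eq_sq_iff_eq_or_eq_neg.mp hsq with hpos | hneg
  · exact absurd (by linear_combination (h1 - 24 * hpos) / (-6)) hlam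
  · exact ⟨hneg, by linear_combination (24 * hneg - h1) / 6⟩

theorem mul_curve_eq_zero_of_neg_scale
    (hg' : g' = -(lam * g)) (hk : lam * (8 * g + 1) = 1)
    (h3 : 81 * g' ^ 3 + 18 * g' ^ 2 + 36 * h' = lam ^ 3 * (81 * g ^ 3 + 18 * g ^ 2 + 36 * h))
    (h4 : 4 * h' ^ 2 = lam ^ 5 * (4 * h ^ 2)) :
    g * (32 * h ^ 2 - 4 * g ^ 2 * h - g ^ 5) = 0 := by
  subst hg'
  have hlam : lam ≠ 0 := left_ne_zero_of_mul_eq_one hk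
  have hh' : 2 * h' = lam ^ 3 * (g ^ 3 + 2 * h) := by
    linear_combination (h3 + 18 * lam ^ 2 * g ^ 2 * hk) / 18
  have hscaled : lam ^ 5 * (lam * (g ^ 3 + 2 * h) ^ 2) = lam ^ 5 * (4 * h ^ 2) := by
    linear_combination h4 - (2 * h' + lam ^ 3 * (g ^ 3 + 2 * h)) * hh'
  have hcurve := mul_left_cancel₀ (pow_ne_zero 5 hlam) hscaled
  linear_combination (g ^ 3 + 2 * h) ^ 2 * hk - (8 * g + 1) * hcurve

end IgusaClebsch

theorem distinct_gh_same_invariants_general (g h g' h' : ℚ)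
    (lam : ℚ)
    (h1 : 24 * g' + 6 = lam * (24 * g + 6))
    (h2 : 9 * g' ^ 2 = lam ^ 2 * (9 * g ^ 2))
    (h3 : 81 * g' ^ 3 + 18 * g' ^ 2 + 36 * h'
      = lam ^ 3 * (81 * g ^ 3 + 18 * g ^ 2 + 36 * h))
    (h4 : 4 * h' ^ 2 = lam ^ 5 * (4 * h ^ 2))
    (hne : (g', h') ≠ (g, h)) :
    g' = -g / (8 * g + 1) ∧ lam = 1 / (8 * g + 1) ∧
      32 * h ^ 2 - 4 * g ^ 2 * h - g ^ 5 = 0 := by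
  have hlam : lam ≠ 1 := by
    rintro rfl
    exact hne (eq_of_igusaClebsch_eq_of_scale_eq_one h1 h3)
  obtain ⟨hg', hk⟩ := neg_scale_of_igusaClebsch_eq hlam h1 h2
  have hg : g ≠ 0 := by
    rintro rfl
    exact hlam (by simpa using hk)
  have hlam_eq : lam = 1 / (8 * g + 1) := eq_one_div_of_mul_eq_one_left hk
  refine ⟨?_, hlam_eq, ?_⟩
  · rw [hg', hlam_eq]
    ring
  · exact (mul_eq_zero.mp (mul_curve_eq_zero_of_neg_scale hg' hk h3 h4)).resolve_left hg

/-- Two distinct affine (g,h)-coordinates give the same Igusa–Clebsch point only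
along the curve 32h² = 4g²h + g⁵. -/
theorem distinct_gh_same_invariants (g h g' h' : ℚ)
    (hh : h ≠ 0) (hh' : h' ≠ 0) (hg : g ≠ 0) (hg' : g' ≠ 0)
    (lam : ℚ) (hlam : lam ≠ 0)
    (h1 : 24 * g' + 6 = lam * (24 * g + 6))
    (h2 : 9 * g' ^ 2 = lam ^ 2 * (9 * g ^ 2))
    (h3 : 81 * g' ^ 3 + 18 * g' ^ 2 + 36 * h'
      = lam ^ 3 * (81 * g ^ 3 + 18 * g ^ 2 + 36 * h))
    (h4 : 4 * h' ^ 2 = lam ^ 5 * (4 * h ^ 2))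
    (hne : (g', h') ≠ (g, h)) :
    g' = -g / (8 * g + 1) ∧ lam = 1 / (8 * g + 1) ∧
      32 * h ^ 2 - 4 * g ^ 2 * h - g ^ 5 = 0 :=
  distinct_gh_same_invariants_general g h g' h' lam h1 h2 h3 h4 hne
end

section
/- For u ∈ ℚ, with g = (u²-1)/8 and h = (u-1)²(u+1)³/1024, the quantity 2(-972g⁵ - 324g⁴ - 27g³ - 4500g²h - 1350gh + 6250h² - 108h) lies in the same square class of ℚ^× as -(43u² + 22u + 43), provided both quantities are nonzero; i.e., their product (or ratio) is a nonzero rational square. -/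
/-- Along X₆, the right-hand side of the Elkies–Kumar equation lies in the same
square class as -(43u² + 22u + 43): their product is a nonzero rational square. -/
theorem X6_square_class (u : ℚ) :
    let g := (u ^ 2 - 1) / 8
    let h := (u - 1) ^ 2 * (u + 1) ^ 3 / 1024
    let A := 2 * (-972 * g ^ 5 - 324 * g ^ 4 - 27 * g ^ 3 - 4500 * g ^ 2 * h
      - 1350 * g * h + 6250 * h ^ 2 - 108 * h)
    let B := -(43 * u ^ 2 + 22 * u + 43)
    A ≠ 0 → B ≠ 0 → ∃ c : ℚ, c ≠ 0 ∧ A * B = c ^ 2 := by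
  intro g h A B hA hB
  refine ⟨(731 * u ^ 6 + 1062 * u ^ 5 + 309 * u ^ 4 - 396 * u ^ 3 - 1083 * u ^ 2
    - 666 * u + 43) / 512, ?_, ?_⟩
  · intro hc
    apply hA
    have h2 : A * B = 0 := by
      show (2 * (-972 * g ^ 5 - 324 * g ^ 4 - 27 * g ^ 3 - 4500 * g ^ 2 * h
        - 1350 * g * h + 6250 * h ^ 2 - 108 * h)) * (-(43 * u ^ 2 + 22 * u + 43)) = 0
      simp only [g, h]
      have := hc
      field_simp at this ⊢
      nlinarith [this, sq_nonneg u]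
    rcases mul_eq_zero.mp h2 with h | h
    · exact h
    · exact absurd h hB
  · show (2 * (-972 * g ^ 5 - 324 * g ^ 4 - 27 * g ^ 3 - 4500 * g ^ 2 * h
      - 1350 * g * h + 6250 * h ^ 2 - 108 * h)) * (-(43 * u ^ 2 + 22 * u + 43)) = _
    simp only [g, h]
    field_simp
    ring
end

section
/- Let k be a field of characteristic 0 and let m, n ∈ k with n ≠ 0 and m² - 5n² - 5 ≠ 0. Then the ternary quadratic form Q₇(x₁,x₂,x₃) = 5x₁² + 2m·x₁x₂ + (m²-5n²-4)x₂² + (4m²-20n²-20)x₂x₃ + (5m²-25n²-25)x₃² is equivalent over k to the diagonal form 5(x₁² - 5x₂² + (m² - 5n² - 5)x₃²); explicitly, the substitution replacing the basis vector e₂ by (m·e₁ - 5e₂ + 2e₃)/n realizes the equivalence. -/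
theorem Q7_diagonalization_general (k : Type) [Field k] (m n : k)
    (hn : n ≠ 0) :
    ∀ x₁ x₂ x₃ : k,
      5 * (x₁ + m / n * x₂) ^ 2
        + 2 * m * (x₁ + m / n * x₂) * (-5 / n * x₂)
        + (m ^ 2 - 5 * n ^ 2 - 4) * (-5 / n * x₂) ^ 2
        + (4 * m ^ 2 - 20 * n ^ 2 - 20) * (-5 / n * x₂) * (x₃ + 2 / n * x₂)
        + (5 * m ^ 2 - 25 * n ^ 2 - 25) * (x₃ + 2 / n * x₂) ^ 2
      = 5 * (x₁ ^ 2 - 5 * x₂ ^ 2 + (m ^ 2 - 5 * n ^ 2 - 5) * x₃ ^ 2) := by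
  intro x₁ x₂ x₃
  field_simp
  ring

/-- Over a field k of characteristic 0, with n ≠ 0 and m² - 5n² - 5 ≠ 0, the
substitution replacing e₂ by (m·e₁ - 5e₂ + 2e₃)/n transforms Q₇ into the diagonal
form 5(x₁² - 5x₂² + (m² - 5n² - 5)x₃²). -/
theorem Q7_diagonalization (k : Type) [Field k] [CharZero k] (m n : k)
    (hn : n ≠ 0) (hD : m ^ 2 - 5 * n ^ 2 - 5 ≠ 0) :
    ∀ x₁ x₂ x₃ : k,
      5 * (x₁ + m / n * x₂) ^ 2
        + 2 * m * (x₁ + m / n * x₂) * (-5 / n * x₂)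
        + (m ^ 2 - 5 * n ^ 2 - 4) * (-5 / n * x₂) ^ 2
        + (4 * m ^ 2 - 20 * n ^ 2 - 20) * (-5 / n * x₂) * (x₃ + 2 / n * x₂)
        + (5 * m ^ 2 - 25 * n ^ 2 - 25) * (x₃ + 2 / n * x₂) ^ 2
      = 5 * (x₁ ^ 2 - 5 * x₂ ^ 2 + (m ^ 2 - 5 * n ^ 2 - 5) * x₃ ^ 2) :=
  Q7_diagonalization_general k m n hn
end
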